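/- arXiv:1502.04382 — 3 statements merged into one kernel-verified Lean document; each statement's English description precedes it below -/
import Mathlib

section
/- Let λ(G) be a temporal graph, where G = (V,E) is a digraph, and let s, v ∈ V be two distinguished vertices. Then the maximum number of pairwise in-disjoint journeys from s to v in λ(G) is equal to the minimum number of node arrival times that need to be removed in order to leave no journey from s to v. -/
/-- A journey (time-respecting path) in a temporal digraph with edge relation `E`
and labeling `lab`, from `s` to `v`: a walk along edges of the digraph together
with a strictly increasing sequence of labels, each chosen from the label set of
the corresponding edge. -/
structure Journey {V : Type*} (E : V → V → Prop) (lab : V → V → Finset ℕ)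
    (s v : V) where
  len : ℕ
  vert : Fin (len + 1) → V
  lbl : Fin len → ℕ
  first : vert 0 = s
  last : vert (Fin.last len) = v
  edge : ∀ i : Fin len, E (vert i.castSucc) (vert i.succ)
  mem : ∀ i : Fin len, lbl i ∈ lab (vert i.castSucc) (vert i.succ)
  mono : StrictMono lbl

/-- Two journeys are in-disjoint if they never arrive at the same node at the same time. -/
def InDisjoint {V : Type*} {E : V → V → Prop} {lab : V → V → Finset ℕ}
    {s₁ v₁ s₂ v₂ : V} (J : Journey E lab s₁ v₁) (J' : Journey E lab s₂ v₂) : Prop :=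
  ∀ (i : Fin J.len) (j : Fin J'.len),
    J.vert i.succ = J'.vert j.succ → J.lbl i ≠ J'.lbl j

/-- The labeling obtained by removing the node arrival times in `D`:
for `(u, t) ∈ D`, the label `t` is deleted from all edges entering `u`. -/
def removeArrivals {V : Type*} [DecidableEq V] (lab : V → V → Finset ℕ)
    (D : Finset (V × ℕ)) : V → V → Finset ℕ :=
  fun u w => (lab u w).filter (fun t => (w, t) ∉ D)

/-! Journeys from `s` to `v` are the walks of the time-expanded digraph whose vertices are the
node arrival times `(w, t)` and whose edges `(u, t) → (w, t')` are the time-edges `(uw, t')` with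
`t < t'`, from an arrival reached from `s` by a single time-edge to an arrival at `v`. In-disjoint
journeys are vertex-disjoint walks and sets of node arrival times separating `s` from `v` are
vertex separators, so the theorem is the set-to-set vertex version of Menger's theorem for this
finite digraph.

Menger's theorem (if every separator has at least `k` vertices, there are `k` disjoint walks) is
proved by induction on the number of edges. If deleting an edge `xy` leaves a
separator `C` with fewer than `k` vertices, then `C + x` and `C + y` separate `S` from `T` in `G`,
so they have exactly `k` vertices, and every separator between `S` and `C + x`, or between `C + y`
and `T`, in `G - xy` separates `S` from `T` in `G`. By induction there are `k` disjoint walks from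
`S` to `C + x` and `k` disjoint walks from `C + y` to `T` in `G - xy`; cut at their first and last
visits to these sets, the two families meet only in `C`, at their ends, and join up across `C` and
along `xy`. -/

open Finset Function

namespace List

variable {α : Type*}

theorem IsPrefix.dropLast {l₁ l₂ : List α} (h : l₁ <+: l₂) : l₁.dropLast <+: l₂.dropLast := by
  obtain ⟨t, rfl⟩ := h
  rcases eq_or_ne t [] with rfl | ht
  · simp
  · rw [dropLast_append_of_ne_nil ht]
    exact l₁.dropLast_prefix.trans (prefix_append _ _)

theorem IsSuffix.tail {l₁ l₂ : List α} (h : l₁ <:+ l₂) : l₁.tail <:+ l₂.tail := by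
  obtain ⟨t, rfl⟩ := h
  cases t with
  | nil => simp
  | cons c t => exact l₁.tail_suffix.trans (suffix_append _ _)

theorem IsChain.imp_of_mem_dropLast_imp {R S : α → α → Prop} {l : List α}
    (H : ∀ a b, a ∈ l.dropLast → R a b → S a b) (p : IsChain R l) : IsChain S l := by
  induction p with grind

theorem exists_concat_prefix_of_exists_mem {p : α → Prop} {l : List α} (h : ∃ a ∈ l, p a) :
    ∃ m b, m ++ [b] <+: l ∧ p b ∧ ∀ a ∈ m, ¬ p a := by
  induction l with
  | nil => simp at h
  | cons c l ih =>
    by_cases hc : p c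
    · exact ⟨[], c, by simp, hc, by simp⟩
    · obtain ⟨m, b, hpre, hb, hm⟩ := ih (by simpa [hc] using h)
      exact ⟨c :: m, b, by simpa using hpre, hb, forall_mem_cons.2 ⟨hc, hm⟩⟩

theorem injective_of_pairwise_disjoint {ι : Type*} {f : ι → List α} {g : ι → α}
    (hf : _root_.Pairwise (Disjoint on f)) (hg : ∀ i, g i ∈ f i) : Function.Injective g :=
  fun i j h => by_contra fun hij => hf hij (hg i) (h ▸ hg j)

end List

section Menger

variable {A : Type*} {r r' : A → A → Prop} {S T U : Set A} {l : List A}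

structure IsWalk (r : A → A → Prop) (S T : Set A) (l : List A) : Prop where
  ne_nil : l ≠ []
  head_mem : ∀ a ∈ l.head?, a ∈ S
  getLast_mem : ∀ a ∈ l.getLast?, a ∈ T
  isChain : l.IsChain r

theorem IsWalk.mono (h : ∀ a b, r a b → r' a b) (hl : IsWalk r S T l) : IsWalk r' S T l :=
  ⟨hl.ne_nil, hl.head_mem, hl.getLast_mem, hl.isChain.imp h⟩

theorem IsWalk.reverse (hl : IsWalk r S T l) : IsWalk (flip r) T S l.reverse :=
  ⟨by simpa using hl.ne_nil, by simpa using hl.getLast_mem, by simpa using hl.head_mem,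
    List.isChain_reverse.2 hl.isChain⟩

theorem isWalk_singleton {a : A} : IsWalk r S T [a] ↔ a ∈ S ∧ a ∈ T :=
  ⟨fun h => ⟨h.head_mem a rfl, h.getLast_mem a rfl⟩, fun h =>
    ⟨List.cons_ne_nil _ _, by simpa using h.1, by simpa using h.2, List.isChain_singleton a⟩⟩

theorem IsWalk.append {l₁ l₂ : List A} {U' : Set A} (h₁ : IsWalk r S U l₁) (h₂ : IsWalk r U' T l₂)
    (h : ∀ a ∈ l₁.getLast?, ∀ b ∈ l₂.head?, r a b) : IsWalk r S T (l₁ ++ l₂) where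
  ne_nil := by simp [h₁.ne_nil]
  head_mem := by rw [List.head?_append_of_ne_nil _ h₁.ne_nil]; exact h₁.head_mem
  getLast_mem := by rw [List.getLast?_append_of_ne_nil _ h₂.ne_nil]; exact h₂.getLast_mem
  isChain := h₁.isChain.append h₂.isChain h

theorem IsWalk.glue {m w : List A} {b : A} {U' : Set A} (h₁ : IsWalk r S U (m ++ [b]))
    (h₂ : IsWalk r U' T (b :: w)) : IsWalk r S T (m ++ b :: w) where
  ne_nil := by simp
  head_mem := by simpa [List.head?_append] using h₁.head_mem
  getLast_mem := by rw [List.getLast?_append_of_ne_nil _ (by simp)]; exact h₂.getLast_mem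
  isChain := by
    rw [← List.singleton_append, ← List.append_assoc]
    exact h₁.isChain.append h₂.isChain.tail (by simpa using h₂.isChain.rel_head?)

theorem IsWalk.exists_mem_right (hl : IsWalk r S T l) : ∃ a ∈ l, a ∈ T :=
  ⟨_, l.getLast_mem hl.ne_nil, hl.getLast_mem _ (List.getLast?_eq_getLast_of_ne_nil hl.ne_nil)⟩

theorem IsWalk.exists_mem_left (hl : IsWalk r S T l) : ∃ a ∈ l, a ∈ S :=
  ⟨_, l.head_mem hl.ne_nil, hl.head_mem _ (List.head?_eq_some_head hl.ne_nil)⟩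

theorem IsWalk.exists_prefix (hl : IsWalk r S T l) (hU : ∃ a ∈ l, a ∈ U) :
    ∃ m b, m ++ [b] <+: l ∧ IsWalk r S U (m ++ [b]) ∧ ∀ a ∈ m, a ∉ U := by
  obtain ⟨m, b, hpre, hb, hm⟩ := List.exists_concat_prefix_of_exists_mem hU
  refine ⟨m, b, hpre, ⟨by simp, ?_, by simpa using hb, hl.isChain.prefix hpre⟩, hm⟩
  obtain ⟨t, rfl⟩ := hpre
  simpa using hl.head_mem

theorem IsWalk.exists_suffix (hl : IsWalk r S T l) (hU : ∃ a ∈ l, a ∈ U) :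
    ∃ b m, b :: m <:+ l ∧ IsWalk r U T (b :: m) ∧ ∀ a ∈ m, a ∉ U := by
  obtain ⟨m, b, hpre, hw, hm⟩ := hl.reverse.exists_prefix (U := U) (by simpa using hU)
  refine ⟨b, m.reverse, ?_, ?_, by simpa using hm⟩
  · simpa using hpre.reverse
  · simpa using hw.reverse

theorem IsWalk.eq_singleton_of_forall_not_rel (hr : ∀ a b, ¬ r a b) (hl : IsWalk r S T l) :
    ∃ a, a ∈ S ∧ a ∈ T ∧ l = [a] :=
  match l, hl with
  | [], hl => (hl.ne_nil rfl).elim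
  | [a], hl => ⟨a, isWalk_singleton.1 hl |>.1, isWalk_singleton.1 hl |>.2, rfl⟩
  | a :: b :: _, hl => (hr a b (List.isChain_cons_cons.1 hl.isChain).1).elim

def IsSeparator (r : A → A → Prop) (S T : Set A) (C : Finset A) : Prop :=
  ∀ l, IsWalk r S T l → ∃ c ∈ C, c ∈ l

variable {C D : Finset A}

theorem isSeparator_reverse : IsSeparator (flip r) T S C ↔ IsSeparator r S T C :=
  ⟨fun h l hl => by simpa using h _ hl.reverse, fun h l hl => by simpa using h _ hl.reverse⟩

theorem isSeparator_coe_right (C : Finset A) : IsSeparator r S C C := fun _ hl =>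
  let ⟨a, hal, haC⟩ := hl.exists_mem_right
  ⟨a, haC, hal⟩

theorem isSeparator_coe_left (C : Finset A) : IsSeparator r C T C := fun _ hl =>
  let ⟨a, hal, haC⟩ := hl.exists_mem_left
  ⟨a, haC, hal⟩

theorem isSeparator_univ [Fintype A] : IsSeparator r S T univ := fun l hl =>
  ⟨_, mem_univ _, l.head_mem hl.ne_nil⟩

/-- Joining the first walk up to `a` with the second from `a` on gives an `S`–`T` walk that can
meet `C` only at `a`. -/
theorem IsSeparator.mem_of_mem_of_mem {U U' : Set A} {m w : List A} {b b' a : A}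
    (hC : IsSeparator r S T C) (hCU : ↑C ⊆ U) (hCU' : ↑C ⊆ U')
    (hP : IsWalk r S U (m ++ [b])) (hm : ∀ c ∈ m, c ∉ U)
    (hQ : IsWalk r U' T (b' :: w)) (hw : ∀ c ∈ w, c ∉ U')
    (ha : a ∈ m ++ [b]) (ha' : a ∈ b' :: w) : a ∈ C := by
  by_contra haC
  obtain ⟨m₁, a₁, hpre, hP₁, -⟩ := hP.exists_prefix (U := {a}) ⟨a, ha, rfl⟩
  obtain ⟨a₂, w₂, hsuf, hQ₂, -⟩ := hQ.exists_suffix (U := {a}) ⟨a, ha', rfl⟩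
  obtain rfl : a₁ = a := by simpa using hP₁.getLast_mem
  obtain rfl : a₂ = a₁ := by simpa using hQ₂.head_mem
  obtain ⟨c, hcC, hc⟩ := hC _ (hP₁.glue hQ₂)
  rw [List.mem_append, List.mem_cons] at hc
  rcases hc with hc | rfl | hc
  · exact hm c (by simpa using hpre.dropLast.subset (by simpa using hc)) (hCU hcC)
  · exact haC hcC
  · exact hw c (by simpa using hsuf.tail.subset hc) (hCU' hcC)

theorem exists_disjoint_walks_of_forall_not_rel [Finite A] {k : ℕ} (hr : ∀ a b, ¬ r a b)
    (hk : ∀ C, IsSeparator r S T C → k ≤ #C) :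
    ∃ f : Fin k → List A, (∀ i, IsWalk r S T (f i)) ∧ Pairwise (List.Disjoint on f) := by
  set Z := (Set.toFinite (S ∩ T)).toFinset
  have hZ : IsSeparator r S T Z := fun l hl => by
    obtain ⟨a, haS, haT, rfl⟩ := hl.eq_singleton_of_forall_not_rel hr
    exact ⟨a, by simp [Z, haS, haT], List.mem_singleton_self a⟩
  obtain ⟨e⟩ := Embedding.nonempty_of_card_le (α := Fin k) (β := Z) (by simpa using hk Z hZ)
  refine ⟨fun i => [(e i : A)], fun i => ?_, fun i j hij => ?_⟩
  · have hi := (e i).2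
    simp only [Z, Set.Finite.mem_toFinset] at hi
    exact isWalk_singleton.2 hi
  · simpa using hij.symm

section

variable [DecidableEq A] {x y : A}

theorem IsSeparator.of_insert_right (hr : ∀ a b, r a b → a ≠ x → r' a b)
    (hC : IsSeparator r' S T C) (hD : IsSeparator r' S ↑(insert x C) D) :
    IsSeparator r S T D := by
  intro l hl
  have hX : ∃ a ∈ l, a ∈ (↑(insert x C) : Set A) := by
    by_cases hx : x ∈ l
    · exact ⟨x, hx, by simp⟩
    · obtain ⟨c, hcC, hcl⟩ := hC l ⟨hl.ne_nil, hl.head_mem, hl.getLast_mem,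
        hl.isChain.imp_of_mem_imp fun a b ha _ hab => hr a b hab (ne_of_mem_of_not_mem ha hx)⟩
      exact ⟨c, hcl, by simp [hcC]⟩
  obtain ⟨m, b, hpre, hw, hm⟩ := hl.exists_prefix hX
  have hw' : IsWalk r' S ↑(insert x C) (m ++ [b]) :=
    ⟨hw.ne_nil, hw.head_mem, hw.getLast_mem, hw.isChain.imp_of_mem_dropLast_imp
      fun a b ha hab => hr a b hab fun hax => hm a (by simpa using ha) (by simp [hax])⟩
  obtain ⟨c, hcD, hc⟩ := hD _ hw'
  exact ⟨c, hcD, hpre.subset hc⟩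

theorem IsSeparator.of_insert_left (hr : ∀ a b, r a b → b ≠ y → r' a b)
    (hC : IsSeparator r' S T C) (hD : IsSeparator r' ↑(insert y C) T D) :
    IsSeparator r S T D :=
  isSeparator_reverse.1 <| IsSeparator.of_insert_right (r := flip r) (r' := flip r')
    (fun a b hab hb => hr b a hab hb) (isSeparator_reverse.2 hC) (isSeparator_reverse.2 hD)

theorem exists_matching_of_insert {k : ℕ} {p q : Fin k → A} (hp : Injective p)
    (hq : Injective q) (hpX : ∀ i, p i ∈ insert x C) (hqY : ∀ j, q j ∈ insert y C)
    (hyC : y ∉ C) (hk : #C + 1 = k) :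
    ∃ σ : Fin k → Fin k, Injective σ ∧ ∀ i, q (σ i) = if p i = x then y else p i := by
  have hσ (i : Fin k) : ∃ j, q j = if p i = x then y else p i := by
    have hφ : (if p i = x then y else p i) ∈ insert y C := by
      split_ifs with h
      · exact mem_insert_self _ _
      · exact mem_insert_of_mem ((mem_insert.1 (hpX i)).resolve_left h)
    obtain ⟨j, -, hj⟩ := surj_on_of_inj_on_of_card_le (s := univ) (fun j _ => q j)
      (fun j _ => hqY j) (fun _ _ _ _ h => hq h) (by simp [card_insert_of_notMem hyC, hk]) _ hφ
    exact ⟨j, hj.symm⟩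
  choose σ hσ using hσ
  refine ⟨σ, fun i j hij => hp ?_, hσ⟩
  have h := (hσ i).symm.trans ((congrArg q hij).trans (hσ j))
  have hyX : ∀ l, p l ≠ x → y ≠ p l := fun l hl hy =>
    hyC (hy ▸ (mem_insert.1 (hpX l)).resolve_left hl)
  split_ifs at h with hi hj hj
  exacts [hi.trans hj.symm, (hyX j hj h).elim, (hyX i hi h.symm).elim, h]

theorem exists_disjoint_walks_of_split {k : ℕ} {p q : Fin k → A} {m w : Fin k → List A}
    (hr : ∀ a b, r' a b → r a b) (hxy : r x y) (hC : IsSeparator r' S T C)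
    (hyC : y ∉ C) (hk : #C + 1 = k)
    (hP : ∀ i, IsWalk r' S ↑(insert x C) (m i ++ [p i])) (hm : ∀ i, ∀ a ∈ m i, a ∉ insert x C)
    (hPd : Pairwise (List.Disjoint on fun i => m i ++ [p i]))
    (hQ : ∀ j, IsWalk r' ↑(insert y C) T (q j :: w j)) (hw : ∀ j, ∀ a ∈ w j, a ∉ insert y C)
    (hQd : Pairwise (List.Disjoint on fun j => q j :: w j)) :
    ∃ f : Fin k → List A, (∀ i, IsWalk r S T (f i)) ∧ Pairwise (List.Disjoint on f) := by
  have hpX : ∀ i, p i ∈ insert x C := fun i => by simpa using (hP i).getLast_mem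
  have hqY : ∀ j, q j ∈ insert y C := fun j => by simpa using (hQ j).head_mem
  have hp : Injective p := List.injective_of_pairwise_disjoint hPd fun i => by simp
  have hq : Injective q := List.injective_of_pairwise_disjoint hQd fun j => by simp
  obtain ⟨σ, hσ_inj, hσ⟩ := exists_matching_of_insert hp hq hpX hqY hyC hk
  have hcross (i j : Fin k) : ∀ a ∈ m i ++ [p i], a ∈ q (σ j) :: w (σ j) → i = j := by
    intro a hai haj
    have haC := hC.mem_of_mem_of_mem (by simp) (by simp) (hP i)
      (fun c hc => by simpa using hm i c hc) (hQ (σ j)) (fun c hc => by simpa using hw (σ j) c hc)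
      hai haj
    have hapi : a = p i := List.mem_singleton.1 <|
      (List.mem_append.1 hai).resolve_left fun h => hm i a h (mem_insert_of_mem haC)
    have haqj : a = q (σ j) :=
      (List.mem_cons.1 haj).resolve_right fun h => hw (σ j) a h (mem_insert_of_mem haC)
    rw [hσ j] at haqj
    split_ifs at haqj with hj
    · exact (hyC (haqj ▸ haC)).elim
    · exact hp (hapi.symm.trans haqj)
  -- walks ending at `x` continue along `xy`, the others where their matched walk starts
  let f i := if p i = x then m i ++ [p i] ++ q (σ i) :: w (σ i) else m i ++ q (σ i) :: w (σ i)
  have hf_mem (i : Fin k) {a : A} (ha : a ∈ f i) :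
      a ∈ m i ++ [p i] ∨ a ∈ q (σ i) :: w (σ i) := by
    by_cases h : p i = x
    · simp only [f, if_pos h] at ha
      exact List.mem_append.1 ha
    · simp only [f, if_neg h] at ha
      exact (List.mem_append.1 ha).imp_left (List.mem_append_left _)
  refine ⟨f, fun i => ?_, fun i j hij a hai haj => ?_⟩
  · by_cases h : p i = x
    · simp only [f, if_pos h]
      refine ((hP i).mono hr).append ((hQ (σ i)).mono hr) ?_
      simpa [hσ, h] using hxy
    · have : q (σ i) = p i := by simp [hσ, h]
      simp only [f, if_neg h, this]
      exact ((hP i).mono hr).glue (this ▸ (hQ (σ i)).mono hr)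
  · rcases hf_mem i hai with hai | hai <;> rcases hf_mem j haj with haj | haj
    · exact hPd hij hai haj
    · exact hij (hcross i j a hai haj)
    · exact hij (hcross j i a haj hai).symm
    · exact hQd (hσ_inj.ne hij) hai haj

theorem exists_disjoint_walks_of_finset [Finite A] (R : Finset (A × A)) (S T : Set A) (k : ℕ)
    (hk : ∀ C, IsSeparator (fun a b => (a, b) ∈ R) S T C → k ≤ #C) :
    ∃ f : Fin k → List A, (∀ i, IsWalk (fun a b => (a, b) ∈ R) S T (f i)) ∧
      Pairwise (List.Disjoint on f) := by
  induction R using Finset.induction_on generalizing S T k with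
  | empty => exact exists_disjoint_walks_of_forall_not_rel (by simp) hk
  | @insert e R _ ih =>
    obtain ⟨x, y⟩ := e
    by_cases hR : ∀ C, IsSeparator (fun a b => (a, b) ∈ R) S T C → k ≤ #C
    · obtain ⟨f, hf, hfd⟩ := ih S T k hR
      exact ⟨f, fun i => (hf i).mono fun a b => mem_insert_of_mem, hfd⟩
    push Not at hR
    obtain ⟨C, hC, hCk⟩ := hR
    have hX (D : Finset A) (hD : IsSeparator (fun a b => (a, b) ∈ R) S ↑(insert x C) D) :
        k ≤ #D :=
      hk D <| hC.of_insert_right (fun a b hab ha => by simpa [ha] using hab) hD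
    have hY (D : Finset A) (hD : IsSeparator (fun a b => (a, b) ∈ R) ↑(insert y C) T D) :
        k ≤ #D :=
      hk D <| hC.of_insert_left (fun a b hab hb => by simpa [hb] using hab) hD
    have hyC : y ∉ C := fun hy => by
      have := hY _ (isSeparator_coe_left _)
      rw [insert_eq_of_mem hy] at this
      omega
    have hk : #C + 1 = k :=
      le_antisymm hCk ((hX _ (isSeparator_coe_right _)).trans (card_insert_le _ _))
    obtain ⟨P, hP, hPd⟩ := ih S _ k hX
    obtain ⟨Q, hQ, hQd⟩ := ih _ T k hY
    choose m p hmP hP' hm using fun i => (hP i).exists_prefix (hP i).exists_mem_right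
    choose q w hwQ hQ' hw using fun j => (hQ j).exists_suffix (hQ j).exists_mem_left
    refine exists_disjoint_walks_of_split (fun a b => mem_insert_of_mem) (mem_insert_self _ _) hC
      hyC hk hP' (fun i a ha => by simpa using hm i a ha) ?_ hQ'
      (fun j a ha => by simpa using hw j a ha) ?_
    · exact fun i j hij => List.disjoint_of_subset_left (hmP i).subset
        (List.disjoint_of_subset_right (hmP j).subset (hPd hij))
    · exact fun i j hij => List.disjoint_of_subset_left (hwQ i).subset
        (List.disjoint_of_subset_right (hwQ j).subset (hQd hij))

end

theorem exists_disjoint_walks [Finite A] (r : A → A → Prop) (S T : Set A) (k : ℕ)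
    (hk : ∀ C, IsSeparator r S T C → k ≤ #C) :
    ∃ f : Fin k → List A, (∀ i, IsWalk r S T (f i)) ∧ Pairwise (List.Disjoint on f) := by
  classical
  have := Fintype.ofFinite A
  have hr : (fun a b => (a, b) ∈ univ.filter fun e : A × A => r e.1 e.2) = r := by
    ext; simp
  rw [← hr] at hk ⊢
  exact exists_disjoint_walks_of_finset _ S T k hk

end Menger

section Temporal

variable {V : Type*} {E : V → V → Prop} {lab : V → V → Finset ℕ} {s v : V}

theorem isEmpty_journey_removeArrivals_iff [DecidableEq V] {D : Finset (V × ℕ)} :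
    IsEmpty (Journey E (removeArrivals lab D) s v) ↔
      ∀ J : Journey E lab s v, ∃ i, (J.vert i.succ, J.lbl i) ∈ D := by
  refine ⟨fun h J => ?_, fun h => ⟨fun J' => ?_⟩⟩
  · by_contra hJ
    push Not at hJ
    exact h.false ⟨J.len, J.vert, J.lbl, J.first, J.last, J.edge,
      fun i => mem_filter.2 ⟨J.mem i, hJ i⟩, J.mono⟩
  · obtain ⟨i, hi⟩ := h ⟨J'.len, J'.vert, J'.lbl, J'.first, J'.last, J'.edge,
      fun i => (mem_filter.1 (J'.mem i)).1, J'.mono⟩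
    exact (mem_filter.1 (J'.mem i)).2 hi

theorem card_le_of_pairwise_inDisjoint [DecidableEq V] {n : ℕ} {J : Fin n → Journey E lab s v}
    {D : Finset (V × ℕ)} (hJ : ∀ i j, i ≠ j → InDisjoint (J i) (J j))
    (hD : IsEmpty (Journey E (removeArrivals lab D) s v)) : n ≤ #D := by
  choose g hg using fun i => isEmpty_journey_removeArrivals_iff.1 hD (J i)
  simpa using card_le_card_of_injOn (s := univ)
    (fun i => ((J i).vert (g i).succ, (J i).lbl (g i))) (fun i _ => hg i) fun i _ j _ h =>
    by_contra fun hij =>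
      hJ i j hij (g i) (g j) (congrArg Prod.fst h) (congrArg Prod.snd h)

variable [Fintype V]

def labels (lab : V → V → Finset ℕ) : Finset ℕ :=
  univ.biUnion fun u => univ.biUnion (lab u)

theorem mem_labels {u w : V} {t : ℕ} (h : t ∈ lab u w) : t ∈ labels lab := by
  simp only [labels, mem_biUnion, mem_univ, true_and]
  exact ⟨u, w, h⟩

abbrev Arrival (lab : V → V → Finset ℕ) := V × labels lab

def arrivalEmb (lab : V → V → Finset ℕ) : Arrival lab ↪ V × ℕ :=
  (Embedding.refl V).prodMap (Embedding.subtype _)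

-- `(u, t) → (w, t')` is the time-edge `(uw, t')` taken after arriving at `u` at time `t`
def arrivalRel (E : V → V → Prop) (lab : V → V → Finset ℕ) (a b : Arrival lab) : Prop :=
  a.2 < b.2 ∧ E a.1 b.1 ∧ ↑b.2 ∈ lab a.1 b.1

def firstArrivals (E : V → V → Prop) (lab : V → V → Finset ℕ) (s : V) : Set (Arrival lab) :=
  {b | E s b.1 ∧ ↑b.2 ∈ lab s b.1}

def arrivalsAt (lab : V → V → Finset ℕ) (v : V) : Set (Arrival lab) :=
  {b | b.1 = v}

namespace Journey

def arrival (J : Journey E lab s v) (i : Fin J.len) : Arrival lab :=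
  (J.vert i.succ, ⟨J.lbl i, mem_labels (J.mem i)⟩)

def arrivals (J : Journey E lab s v) : List (Arrival lab) :=
  List.ofFn J.arrival

theorem isWalk_arrivals (hsv : s ≠ v) (J : Journey E lab s v) :
    IsWalk (arrivalRel E lab) (firstArrivals E lab s) (arrivalsAt lab v) J.arrivals := by
  rcases J with ⟨_ | n, vert, lbl, first, last, edge, mem, mono⟩
  · exact (hsv (first.symm.trans last)).elim
  refine ⟨by simp [arrivals], ?_, ?_, ?_⟩
  · simp only [arrivals, List.ofFn_succ, List.head?_cons, Option.mem_def, Option.some.injEq,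
      forall_eq']
    exact ⟨first ▸ edge 0, first ▸ mem 0⟩
  · rw [arrivals, List.ofFn_succ', List.concat_eq_append, List.getLast?_concat]
    rintro _ ⟨⟩
    exact last
  · exact List.isChain_ofFn.2 fun i hi =>
      ⟨mono (Fin.mk_lt_mk.2 i.lt_succ_self), edge ⟨i + 1, hi⟩, mem ⟨i + 1, hi⟩⟩

end Journey

theorem exists_journey_of_isWalk {l : List (Arrival lab)}
    (hl : IsWalk (arrivalRel E lab) (firstArrivals E lab s) (arrivalsAt lab v) l) :
    ∃ J : Journey E lab s v, J.arrivals = l := by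
  obtain ⟨n, g, rfl⟩ : ∃ (n : ℕ) (g : Fin n → Arrival lab), l = List.ofFn g :=
    ⟨_, _, (List.ofFn_get l).symm⟩
  have hchain := List.isChain_ofFn.1 hl.isChain
  cases n with
  | zero => exact (hl.ne_nil rfl).elim
  | succ n =>
    let vert : Fin (n + 2) → V := Fin.cons s fun i => (g i).1
    have hstep (i : Fin (n + 1)) :
        E (vert i.castSucc) (g i).1 ∧ ↑(g i).2 ∈ lab (vert i.castSucc) (g i).1 := by
      rcases i with ⟨_ | j, hj⟩
      · exact hl.head_mem _ (by simp [List.ofFn_succ])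
      · exact (hchain j hj).2
    refine ⟨⟨n + 1, vert, fun i => (g i).2, rfl, ?_, fun i => (hstep i).1, fun i => (hstep i).2,
      Fin.strictMono_iff_lt_succ.2 fun i => (hchain i (by omega)).1⟩, rfl⟩
    refine hl.getLast_mem _ ?_
    rw [List.ofFn_succ', List.concat_eq_append, List.getLast?_concat]
    rfl

theorem inDisjoint_of_disjoint {J J' : Journey E lab s v} (h : J.arrivals.Disjoint J'.arrivals) :
    InDisjoint J J' := fun i j hv hl =>
  h (List.mem_ofFn.2 ⟨i, rfl⟩) (List.mem_ofFn.2 ⟨j, Prod.ext hv.symm (Subtype.ext hl.symm)⟩)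

theorem isEmpty_journey_removeArrivals_map [DecidableEq V] (hsv : s ≠ v)
    {C : Finset (Arrival lab)}
    (hC : IsSeparator (arrivalRel E lab) (firstArrivals E lab s) (arrivalsAt lab v) C) :
    IsEmpty (Journey E (removeArrivals lab (C.map (arrivalEmb lab))) s v) :=
  isEmpty_journey_removeArrivals_iff.2 fun J => by
    obtain ⟨c, hcC, hc⟩ := hC _ (J.isWalk_arrivals hsv)
    obtain ⟨i, rfl⟩ := List.mem_ofFn.1 hc
    exact ⟨i, mem_map_of_mem _ hcC⟩

end Temporal

/-- Menger's temporal analogue (in-disjoint version): the maximum number of pairwise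
in-disjoint journeys from `s` to `v` equals the minimum number of node arrival
times whose removal leaves no journey from `s` to `v`. -/
theorem menger_temporal_in_disjoint {V : Type*} [Fintype V] [DecidableEq V]
    (E : V → V → Prop) (lab : V → V → Finset ℕ) (s v : V) (hsv : s ≠ v) :
    ∃ M : ℕ,
      IsGreatest {n | ∃ J : Fin n → Journey E lab s v,
        ∀ i j, i ≠ j → InDisjoint (J i) (J j)} M ∧
      IsLeast {n | ∃ D : Finset (V × ℕ), D.card = n ∧
        IsEmpty (Journey E (removeArrivals lab D) s v)} M := by
  set N := {n | ∃ D : Finset (V × ℕ), D.card = n ∧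
    IsEmpty (Journey E (removeArrivals lab D) s v)}
  have hN : N.Nonempty := ⟨_, _, rfl, isEmpty_journey_removeArrivals_map hsv isSeparator_univ⟩
  refine ⟨sInf N, ⟨?_, ?_⟩, Nat.sInf_mem hN, fun n hn => Nat.sInf_le hn⟩
  · obtain ⟨f, hf, hfd⟩ := exists_disjoint_walks (arrivalRel E lab) (firstArrivals E lab s)
      (arrivalsAt lab v) (sInf N) fun C hC =>
        Nat.sInf_le ⟨_, card_map _, isEmpty_journey_removeArrivals_map hsv hC⟩
    choose J hJ using fun i => exists_journey_of_isWalk (hf i)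
    exact ⟨J, fun i j hij => inDisjoint_of_disjoint (by rw [hJ, hJ]; exact hfd hij)⟩
  · rintro n ⟨J, hJ⟩
    obtain ⟨D, hD, hsep⟩ := Nat.sInf_mem hN
    exact hD ▸ card_le_of_pairwise_inDisjoint hJ hsep
end

section
/- Let λ(G) be a temporal graph, where G = (V,E) is a digraph, and let s, v ∈ V be two distinguished vertices. Then the maximum number of pairwise time-edge disjoint journeys from s to v in λ(G) is equal to the minimum number of time-edges whose removal leaves no journey from s to v. -/
/-- Two journeys are time-edge disjoint if no time-edge `(e, t)` is used by both. -/
def TimeEdgeDisjoint {V : Type*} {E : V → V → Prop} {lab : V → V → Finset ℕ}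
    {s₁ v₁ s₂ v₂ : V} (J : Journey E lab s₁ v₁) (J' : Journey E lab s₂ v₂) : Prop :=
  ∀ (i : Fin J.len) (j : Fin J'.len),
    J.vert i.castSucc = J'.vert j.castSucc → J.vert i.succ = J'.vert j.succ →
      J.lbl i ≠ J'.lbl j

/-- The labeling obtained by removing the time-edges in `D`:
for `(u, w, t) ∈ D`, the label `t` is deleted from the label set of the edge `(u, w)`. -/
def removeTimeEdges {V : Type*} [DecidableEq V] (lab : V → V → Finset ℕ)
    (D : Finset (V × V × ℕ)) : V → V → Finset ℕ :=
  fun u w => (lab u w).filter (fun t => (u, w, t) ∉ D)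

theorem Relation.ReflTransGen.exists_nodup_isChain {α : Type*} [DecidableEq α]
    {r : α → α → Prop} {a b : α} (h : Relation.ReflTransGen r a b) :
    ∃ l : List α, l.IsChain r ∧ l.Nodup ∧ l.head? = some a ∧ l.getLast? = some b := by
  induction h with
  | refl => exact ⟨[a], .singleton a, List.nodup_singleton a, rfl, rfl⟩
  | @tail b c _ hbc ih =>
    obtain ⟨l, hchain, hnodup, hhead, hlast⟩ := ih
    by_cases hc : c ∈ l
    · obtain ⟨p, q, rfl⟩ := List.append_of_mem hc
      refine ⟨p ++ [c], ?_, hnodup.sublist (by simp), by cases p <;> simp_all, by simp⟩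
      exact (show (p ++ [c]) ++ q = p ++ c :: q by simp) ▸ hchain |>.left_of_append
    · refine ⟨l ++ [c], hchain.append (.singleton c) (by simpa [hlast] using hbc),
        hnodup.append (List.nodup_singleton c) (by simpa using hc), by cases l <;> simp_all,
        by simp⟩

namespace FlowNetwork

open Finset

variable {α : Type*}

def unitArc [DecidableEq α] (a b : α) : α → α → ℕ := fun x y => if x = a ∧ y = b then 1 else 0

lemma sub_unitArc_add [DecidableEq α] {f : α → α → ℕ} {a b : α} (h : 0 < f a b) :
    f - unitArc a b + unitArc a b = f := by
  ext x y
  simp only [Pi.add_apply, Pi.sub_apply, unitArc]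
  split_ifs with hxy
  · obtain ⟨rfl, rfl⟩ := hxy; omega
  · rfl

def Residual (c f : α → α → ℕ) (a b : α) : Prop := f a b < c a b ∨ 0 < f b a

variable [Fintype α]

def netFlow (f : α → α → ℕ) (a : α) : ℤ := ∑ b, (f a b : ℤ) - ∑ b, (f b a : ℤ)

lemma netFlow_add (f g : α → α → ℕ) : netFlow (f + g) = netFlow f + netFlow g := by
  ext a
  simp only [netFlow, Pi.add_apply, Nat.cast_add, sum_add_distrib]
  ring

lemma exists_pos_of_netFlow_pos {f : α → α → ℕ} {a : α} (h : 0 < netFlow f a) :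
    ∃ b, 0 < f a b := by
  by_contra! hzero
  have : ∑ b, (f a b : ℤ) = 0 := sum_eq_zero fun b _ => by simp [Nat.le_zero.1 (hzero b)]
  have : 0 ≤ ∑ b, (f b a : ℤ) := sum_nonneg fun b _ => Int.natCast_nonneg _
  simp only [netFlow] at h
  omega

variable [DecidableEq α]

def IsFlow (c : α → α → ℕ) (s t : α) (n : ℕ) (f : α → α → ℕ) : Prop :=
  f ≤ c ∧ ∀ a ≠ t, netFlow f a = if a = s then (n : ℤ) else 0

def cutCap (c : α → α → ℕ) (S : Finset α) : ℕ := ∑ a ∈ S, ∑ b ∈ Sᶜ, c a b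

lemma netFlow_unitArc (a b x : α) :
    netFlow (unitArc a b) x = (if x = a then 1 else 0) - if x = b then 1 else 0 := by
  simp [netFlow, unitArc, ite_and]

lemma netFlow_sub_unitArc {g : α → α → ℕ} {a b : α} (h : 0 < g a b) (x : α) :
    netFlow (g - unitArc a b) x =
      netFlow g x - (if x = a then 1 else 0) + if x = b then 1 else 0 := by
  conv_rhs => rw [← sub_unitArc_add h, netFlow_add, Pi.add_apply, netFlow_unitArc]
  ring

lemma le_cutCap (c : α → α → ℕ) {S : Finset α} {a b : α} (ha : a ∈ S) (hb : b ∉ S) :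
    c a b ≤ cutCap c S :=
  (single_le_sum (f := fun b => c a b) (fun _ _ => Nat.zero_le _) (mem_compl.2 hb)).trans
    (single_le_sum (f := fun a => ∑ b ∈ Sᶜ, c a b) (fun _ _ => Nat.zero_le _) ha)

lemma sum_netFlow (f : α → α → ℕ) (S : Finset α) :
    ∑ a ∈ S, netFlow f a =
      ∑ a ∈ S, ∑ b ∈ Sᶜ, (f a b : ℤ) - ∑ a ∈ Sᶜ, ∑ b ∈ S, (f a b : ℤ) := by
  have hinner : ∑ a ∈ S, ∑ b ∈ S, (f b a : ℤ) = ∑ a ∈ S, ∑ b ∈ S, (f a b : ℤ) := sum_comm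
  have hacross : ∑ a ∈ S, ∑ b ∈ Sᶜ, (f b a : ℤ) = ∑ a ∈ Sᶜ, ∑ b ∈ S, (f a b : ℤ) := sum_comm
  simp only [netFlow, sum_sub_distrib, ← sum_add_sum_compl S, sum_add_distrib, hinner, hacross]
  ring

section

variable {c f g : α → α → ℕ} {s t : α} {n : ℕ} {S : Finset α}

lemma isFlow_zero : IsFlow c s t 0 0 :=
  ⟨fun _ _ => Nat.zero_le _, fun _ _ => by simp [netFlow]⟩

lemma IsFlow.value_eq (hf : IsFlow c s t n f) (hs : s ∈ S) (ht : t ∉ S) :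
    (n : ℤ) = ∑ a ∈ S, ∑ b ∈ Sᶜ, (f a b : ℤ) - ∑ a ∈ Sᶜ, ∑ b ∈ S, (f a b : ℤ) := by
  rw [← sum_netFlow, sum_congr rfl fun a ha => hf.2 a (ne_of_mem_of_not_mem ha ht),
    sum_ite_eq', if_pos hs]

lemma IsFlow.le_cutCap (hf : IsFlow c s t n f) (hs : s ∈ S) (ht : t ∉ S) : n ≤ cutCap c S := by
  have hval := hf.value_eq hs ht
  have hback : 0 ≤ ∑ a ∈ Sᶜ, ∑ b ∈ S, (f a b : ℤ) := by positivity
  have hcap : ∑ a ∈ S, ∑ b ∈ Sᶜ, (f a b : ℤ) ≤ cutCap c S := by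
    simp only [cutCap, Nat.cast_sum]
    gcongr with a _ b _
    exact_mod_cast hf.1 a b
  omega

lemma exists_update_of_residual (hg : g ≤ c) {a b : α} (hres : Residual c g a b) :
    ∃ g', g' ≤ c ∧
      (∀ x, netFlow g' x = netFlow g x + (if x = a then 1 else 0) - if x = b then 1 else 0) ∧
      ∀ x y, g' x y ≠ g x y → (x = a ∨ x = b) ∧ (y = a ∨ y = b) := by
  rcases hres with hlt | hpos
  · refine ⟨g + unitArc a b, fun x y => ?_, ?_, fun x y hxy => ?_⟩
    · by_cases hxy : x = a ∧ y = b
      · obtain ⟨rfl, rfl⟩ := hxy; simpa [unitArc] using hlt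
      · simpa [unitArc, hxy] using hg x y
    · intro x; rw [netFlow_add, Pi.add_apply, netFlow_unitArc]; ring
    · by_cases h : x = a ∧ y = b
      · exact ⟨.inl h.1, .inr h.2⟩
      · simp [unitArc, h] at hxy
  · refine ⟨g - unitArc b a, fun x y => (Nat.sub_le _ _).trans (hg x y), ?_, fun x y hxy => ?_⟩
    · intro x; rw [netFlow_sub_unitArc hpos]; ring
    · by_cases h : x = b ∧ y = a
      · exact ⟨.inr h.1, .inl h.2⟩
      · simp [unitArc, h] at hxy

/-- The unit of deficit of `g` travels from `u` to the end `w` of a simple residual path of `f`.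
Since the path never revisits a vertex, each arc it uses is still untouched when it is reached, so
its residual capacity can be read off `f`. -/
lemma exists_augment_along {σ : α → ℤ} : ∀ (l : List α) (u w : α) (g : α → α → ℕ),
    (u :: l).IsChain (Residual c f) → (u :: l).Nodup → (u :: l).getLast? = some w → g ≤ c →
    (∀ a ≠ t, netFlow g a = σ a - if a = u then 1 else 0) →
    (∀ x y, g x y ≠ f x y → x ∉ l ∧ y ∉ l) →
    ∃ g', g' ≤ c ∧ ∀ a ≠ t, netFlow g' a = σ a - if a = w then 1 else 0
  | [], u, w, g, _, _, hlast, hg, hbal, _ => by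
    obtain rfl : u = w := by simpa using hlast
    exact ⟨g, hg, hbal⟩
  | b :: l, u, w, g, hchain, hnodup, hlast, hg, hbal, hagree => by
    obtain ⟨hub, hchain⟩ := List.isChain_cons_cons.1 hchain
    obtain ⟨hu, hnodup⟩ := List.nodup_cons.1 hnodup
    have hb : b ∉ l := (List.nodup_cons.1 hnodup).1
    have hres : Residual c g u b := by
      have hub' : g u b = f u b := by_contra fun h => (hagree u b h).2 List.mem_cons_self
      have hbu' : g b u = f b u := by_contra fun h => (hagree b u h).1 List.mem_cons_self
      rwa [Residual, hub', hbu']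
    obtain ⟨g', hg', hnet, hdiff⟩ := exists_update_of_residual hg hres
    refine exists_augment_along l b w g' hchain hnodup (by simpa using hlast) hg'
      (fun a ha => ?_) ?_
    · rw [hnet, hbal a ha]; ring
    · intro x y hxy
      by_cases hchg : g' x y = g x y
      · have := hagree x y (hchg ▸ hxy)
        exact ⟨fun h => this.1 (List.mem_cons_of_mem _ h),
          fun h => this.2 (List.mem_cons_of_mem _ h)⟩
      · obtain ⟨hx, hy⟩ := hdiff x y hchg
        have hul : u ∉ l := fun h => hu (List.mem_cons_of_mem _ h)
        exact ⟨by rcases hx with rfl | rfl <;> assumption,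
          by rcases hy with rfl | rfl <;> assumption⟩

lemma IsFlow.exists_succ_of_reflTransGen (hf : IsFlow c s t n f)
    (hst : Relation.ReflTransGen (Residual c f) s t) : ∃ g, IsFlow c s t (n + 1) g := by
  obtain ⟨l, hchain, hnodup, hhead, hlast⟩ := hst.exists_nodup_isChain
  obtain ⟨l, rfl⟩ := List.head?_eq_some_iff.1 hhead
  have hdeficit : ∀ a ≠ t, netFlow f a = (if a = s then ((n + 1 : ℕ) : ℤ) else 0) -
      if a = s then 1 else 0 := fun a ha => by
    rw [hf.2 a ha]; split_ifs <;> simp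
  obtain ⟨g, hg, hbal⟩ := exists_augment_along l s t f hchain hnodup hlast hf.1 hdeficit
    fun x y h => absurd rfl h
  exact ⟨g, hg, fun a ha => by simp [hbal a ha, ha]⟩

end

/-- Max-flow min-cut: a maximum flow leaves the target unreachable in its residual graph, and the
set of vertices that remain reachable is a cut which the flow saturates. -/
theorem exists_isFlow_eq_cutCap (c : α → α → ℕ) {s t : α} (hst : s ≠ t) :
    ∃ n f S, IsFlow c s t n f ∧ s ∈ S ∧ t ∉ S ∧ cutCap c S = n := by
  classical
  have hbound : ∀ n f, IsFlow c s t n f → n ≤ cutCap c {s} := fun n f hf =>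
    hf.le_cutCap (mem_singleton_self s) (by simpa using hst.symm)
  set n := Nat.findGreatest (fun n => ∃ f, IsFlow c s t n f) (cutCap c {s})
  obtain ⟨f, hf⟩ : ∃ f, IsFlow c s t n f :=
    Nat.findGreatest_spec (P := fun n => ∃ f, IsFlow c s t n f) (Nat.zero_le _) ⟨0, isFlow_zero⟩
  set S := univ.filter (Relation.ReflTransGen (Residual c f) s)
  have hs : s ∈ S := mem_filter.2 ⟨mem_univ _, .refl⟩
  have ht : t ∉ S := fun h => by
    obtain ⟨g, hg⟩ := hf.exists_succ_of_reflTransGen (mem_filter.1 h).2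
    have := Nat.le_findGreatest (P := fun n => ∃ f, IsFlow c s t n f) (hbound _ _ hg) ⟨g, hg⟩
    omega
  have hreach : ∀ a ∈ S, ∀ b, Residual c f a b → b ∈ S := fun a ha b hab =>
    mem_filter.2 ⟨mem_univ _, (mem_filter.1 ha).2.tail hab⟩
  have hsat : ∀ a ∈ S, ∀ b ∈ Sᶜ, (f a b : ℤ) = c a b := fun a ha b hb => by
    have : ¬ f a b < c a b := fun h => mem_compl.1 hb (hreach a ha b (.inl h))
    exact_mod_cast le_antisymm (hf.1 a b) (not_lt.1 this)
  have hempty : ∀ a ∈ Sᶜ, ∀ b ∈ S, (f a b : ℤ) = 0 := fun a ha b hb => by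
    have : ¬ 0 < f a b := fun h => mem_compl.1 ha (hreach b hb a (.inr h))
    exact_mod_cast Nat.eq_zero_of_not_pos this
  refine ⟨n, f, S, hf, hs, ht, ?_⟩
  have hval := hf.value_eq hs ht
  rw [sum_congr rfl fun a ha => sum_congr rfl (hsat a ha),
    sum_eq_zero fun a ha => sum_eq_zero (hempty a ha), sub_zero] at hval
  exact_mod_cast hval.symm

end FlowNetwork

namespace Journey

open Finset

variable {V : Type*} {E : V → V → Prop} {lab : V → V → Finset ℕ}

def timeEdge {s v : V} (J : Journey E lab s v) (i : Fin J.len) : V × V × ℕ :=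
  (J.vert i.castSucc, J.vert i.succ, J.lbl i)

lemma timeEdgeDisjoint_iff {s₁ v₁ s₂ v₂ : V} {J : Journey E lab s₁ v₁}
    {J' : Journey E lab s₂ v₂} : TimeEdgeDisjoint J J' ↔ ∀ i j, J.timeEdge i ≠ J'.timeEdge j := by
  simp only [TimeEdgeDisjoint, timeEdge, ne_eq, Prod.mk.injEq, not_and]

lemma timeEdgeDisjoint_of_separates {s₁ v₁ s₂ v₂ : V} {J : Journey E lab s₁ v₁}
    {J' : Journey E lab s₂ v₂} (P : V × V × ℕ → Prop) (h : ∀ i, P (J.timeEdge i))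
    (h' : ∀ j, ¬ P (J'.timeEdge j)) : TimeEdgeDisjoint J J' :=
  timeEdgeDisjoint_iff.2 fun i j hij => h' j (hij ▸ h i)

lemma len_pos {s v : V} (J : Journey E lab s v) (hsv : s ≠ v) : 0 < J.len := by
  refine Nat.pos_of_ne_zero fun h => hsv ?_
  exact J.first.symm.trans ((congrArg J.vert (Fin.ext (by simp [h]))).trans J.last)

def nil (v : V) : Journey E lab v v where
  len := 0
  vert := fun _ => v
  lbl := Fin.elim0
  first := rfl
  last := rfl
  edge := fun i => i.elim0
  mem := fun i => i.elim0
  mono := fun i => i.elim0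

def cons {x y v : V} {t : ℕ} (hE : E x y) (ht : t ∈ lab x y) (J : Journey E lab y v)
    (hlt : ∀ i, t < J.lbl i) : Journey E lab x v where
  len := J.len + 1
  vert := Fin.cons x J.vert
  lbl := Fin.cons t J.lbl
  first := rfl
  last := by rw [← Fin.succ_last, Fin.cons_succ, J.last]
  edge := Fin.cases (by simpa [J.first] using hE) fun i => by simpa using J.edge i
  mem := Fin.cases (by simpa [J.first] using ht) fun i => by simpa using J.mem i
  mono := Fin.strictMono_cons.2 ⟨hlt, J.mono⟩

lemma forall_timeEdge_cons {x y v : V} {t : ℕ} {hE : E x y} {ht : t ∈ lab x y}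
    {J : Journey E lab y v} {hlt : ∀ i, t < J.lbl i} {P : V × V × ℕ → Prop} :
    (∀ i, P ((cons hE ht J hlt).timeEdge i)) ↔ P (x, y, t) ∧ ∀ i, P (J.timeEdge i) := by
  simp [Fin.forall_fin_succ, timeEdge, cons, J.first]

lemma exists_of_step {s v : V} (J : Journey E lab s v) (P : V → ℕ → Prop) (h0 : P s 0)
    (hstep : ∀ k τ, τ ≤ J.lbl k → P (J.vert k.castSucc) τ → P (J.vert k.succ) (J.lbl k + 1)) :
    ∃ τ, P v τ := by
  have key : ∀ m (hm : m < J.len + 1), ∃ τ, P (J.vert ⟨m, hm⟩) τ ∧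
      ∀ k : Fin J.len, m ≤ k → τ ≤ J.lbl k := by
    intro m
    induction m with
    | zero => exact fun _ => ⟨0, by simpa [← J.first] using h0, fun _ _ => Nat.zero_le _⟩
    | succ m ih =>
      intro hm
      obtain ⟨τ, hP, hτ⟩ := ih (by omega)
      let k₀ : Fin J.len := ⟨m, by omega⟩
      refine ⟨J.lbl k₀ + 1, hstep k₀ τ (hτ k₀ le_rfl) hP, fun k hk => J.mono ?_⟩
      exact Fin.lt_def.2 hk
  obtain ⟨τ, hP, -⟩ := key J.len (by omega)
  exact ⟨τ, J.last ▸ hP⟩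

lemma exists_timeEdge_mem_of_isEmpty [DecidableEq V] {s v : V} {D : Finset (V × V × ℕ)}
    (hD : IsEmpty (Journey E (removeTimeEdges lab D) s v)) (J : Journey E lab s v) :
    ∃ i, J.timeEdge i ∈ D := by
  by_contra! h
  exact hD.false { J with mem := fun i => mem_filter.2 ⟨J.mem i, h i⟩ }

lemma le_card_of_pairwise_timeEdgeDisjoint {s v : V} {n : ℕ} (J : Fin n → Journey E lab s v)
    (hJ : Pairwise fun i j => TimeEdgeDisjoint (J i) (J j)) (D : Finset (V × V × ℕ))
    (hD : ∀ i, ∃ k, (J i).timeEdge k ∈ D) : n ≤ D.card := by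
  choose k hk using hD
  have hinj : Set.InjOn (fun i => (J i).timeEdge (k i)) (univ : Finset (Fin n)) :=
    fun i _ j _ hij => by_contra fun hne => timeEdgeDisjoint_iff.1 (hJ hne) _ _ hij
  simpa using card_le_card_of_injOn _ (fun i _ => hk i) hinj

end Journey

namespace TimeExpanded

open Finset FlowNetwork

variable {V : Type*} (E : V → V → Prop) (lab : V → V → Finset ℕ) (T W : ℕ)

def arc (e : V × V × ℕ) : (V × Fin (T + 1)) × (V × Fin (T + 1)) :=
  ((e.1, Fin.ofNat (T + 1) e.2.2), (e.2.1, Fin.ofNat (T + 1) (e.2.2 + 1)))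

variable {T} in
lemma arc_val (x y : V) (i : Fin T) : arc T (x, y, i.val) = ((x, i.castSucc), (y, i.succ)) := by
  ext <;> simp [arc, Nat.mod_eq_of_lt, i.isLt]

variable [DecidableEq V]

open Classical in
/-- The time-expanded network: the vertex `(x, i)` is `x` at time `i`, and from time `i` to
time `i + 1` one may either wait at `x` (capacity `W`) or traverse a time-edge `(x, y, i)`
(capacity `1`). -/
noncomputable def cap (p q : V × Fin (T + 1)) : ℕ :=
  if q.2.val = p.2.val + 1 then
    (if p.1 = q.1 then W else 0) + (if E p.1 q.1 ∧ p.2.val ∈ lab p.1 q.1 then 1 else 0)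
  else 0

variable {E lab T W}

lemma time_succ_of_cap_pos {p q : V × Fin (T + 1)} (h : 0 < cap E lab T W p q) :
    q.2.val = p.2.val + 1 := by
  by_contra hne
  simp [cap, hne] at h

lemma le_cap_wait (x : V) (i : Fin T) : W ≤ cap E lab T W (x, i.castSucc) (x, i.succ) := by
  simp [cap]

variable [Fintype V] {s v : V}

lemma exists_step_of_excess {n : ℕ} {g : V × Fin (T + 1) → V × Fin (T + 1) → ℕ}
    (hg : g ≤ cap E lab T W) {x : V} {i : Fin (T + 1)} (hsink : (x, i) ≠ (v, Fin.last T))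
    (hbal : ∀ a ≠ (v, Fin.last T), netFlow g a =
      (if a = (s, 0) then (n : ℤ) else 0) + if a = (x, i) then 1 else 0) :
    ∃ (j : Fin T) (y : V), j.castSucc = i ∧ 0 < g (x, i) (y, j.succ) ∧
      ∀ a ≠ (v, Fin.last T), netFlow (g - unitArc (x, i) (y, j.succ)) a =
        (if a = (s, 0) then (n : ℤ) else 0) + if a = (y, j.succ) then 1 else 0 := by
  obtain ⟨⟨y, k⟩, hb⟩ := exists_pos_of_netFlow_pos (by rw [hbal _ hsink, if_pos rfl]; positivity)
  have hk : k.val = i.val + 1 := time_succ_of_cap_pos (hb.trans_le (hg _ _))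
  have hiT : i.val < T := by have := k.isLt; omega
  obtain rfl : k = (⟨i.val, hiT⟩ : Fin T).succ := Fin.ext hk
  refine ⟨⟨i.val, hiT⟩, y, rfl, hb, fun a ha => ?_⟩
  rw [netFlow_sub_unitArc hb, hbal a ha]
  ring

lemma exists_journey_of_excess (n : ℕ) (i : Fin (T + 1)) :
    ∀ (x : V) (g : V × Fin (T + 1) → V × Fin (T + 1) → ℕ), g ≤ cap E lab T W →
    (∀ a ≠ (v, Fin.last T), netFlow g a =
      (if a = (s, 0) then (n : ℤ) else 0) + if a = (x, i) then 1 else 0) →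
    ∃ (J : Journey E lab x v) (g' : V × Fin (T + 1) → V × Fin (T + 1) → ℕ),
      IsFlow (cap E lab T W) (s, 0) (v, Fin.last T) n g' ∧ g' ≤ g ∧
      ∀ k, i.val ≤ (J.timeEdge k).2.2 ∧ Function.uncurry g' (arc T (J.timeEdge k)) = 0 ∧
        0 < Function.uncurry g (arc T (J.timeEdge k)) := by
  induction i using Fin.reverseInduction with
  | last =>
    intro x g hg hbal
    by_cases hxv : x = v
    · subst hxv
      exact ⟨Journey.nil x, g, ⟨hg, fun a ha => by simpa [ha] using hbal a ha⟩, le_rfl,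
        fun k => k.elim0⟩
    · obtain ⟨j, -, hj, -⟩ := exists_step_of_excess hg (by simp [hxv]) hbal
      exact absurd hj (Fin.castSucc_ne_last j)
  | cast i ih =>
    intro x g hg hbal
    obtain ⟨j, y, hj, hb, hbal₁⟩ :=
      exists_step_of_excess hg (by simp [Fin.castSucc_ne_last]) hbal
    obtain rfl := Fin.castSucc_injective _ hj
    set g₁ := g - unitArc (x, j.castSucc) (y, j.succ)
    have hg₁ : g₁ ≤ g := fun _ _ => Nat.sub_le _ _
    obtain ⟨J, g', hg', hle, hJ⟩ := ih y g₁ (hg₁.trans hg) hbal₁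
    have hJ₁ : ∀ k, j.castSucc.val ≤ (J.timeEdge k).2.2 ∧
        Function.uncurry g' (arc T (J.timeEdge k)) = 0 ∧
        0 < Function.uncurry g (arc T (J.timeEdge k)) := fun k =>
      ⟨(Nat.le_succ _).trans (hJ k).1, (hJ k).2.1, (hJ k).2.2.trans_le (hg₁ _ _)⟩
    by_cases hxy : x = y
    · subst hxy
      exact ⟨J, g', hg', hle.trans hg₁, hJ₁⟩
    -- a step to another vertex is a time-edge, whose arc has capacity one and is now used up
    have hcap := hb.trans_le (hg _ _)
    have hte : E x y ∧ j.val ∈ lab x y := by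
      by_contra h
      simp [cap, hxy, h] at hcap
    have hone : g (x, j.castSucc) (y, j.succ) ≤ 1 := by
      simpa [cap, hxy, hte] using hg (x, j.castSucc) (y, j.succ)
    have hused : g' (x, j.castSucc) (y, j.succ) = 0 := by
      have := hle (x, j.castSucc) (y, j.succ)
      simp only [g₁, Pi.sub_apply, unitArc, and_self, if_true] at this
      omega
    refine ⟨J.cons hte.1 hte.2 fun k => (hJ k).1, g', hg', hle.trans hg₁,
      Journey.forall_timeEdge_cons (P := fun e => j.castSucc.val ≤ e.2.2 ∧
        Function.uncurry g' (arc T e) = 0 ∧ 0 < Function.uncurry g (arc T e)) |>.2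
      ⟨⟨le_rfl, ?_, ?_⟩, hJ₁⟩⟩ <;> simpa [arc_val]

lemma exists_journeys_of_isFlow : ∀ (n : ℕ) (g : V × Fin (T + 1) → V × Fin (T + 1) → ℕ),
    IsFlow (cap E lab T W) (s, 0) (v, Fin.last T) n g →
    ∃ J : Fin n → Journey E lab s v,
      (∀ i k, 0 < Function.uncurry g (arc T ((J i).timeEdge k))) ∧
      Pairwise fun i j => TimeEdgeDisjoint (J i) (J j)
  | 0, _, _ => ⟨Fin.elim0, fun i => i.elim0, fun i => i.elim0⟩
  | n + 1, g, hg => by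
    have hbal : ∀ a ≠ (v, Fin.last T), netFlow g a =
        (if a = (s, 0) then (n : ℤ) else 0) + if a = (s, 0) then 1 else 0 := fun a ha => by
      rw [hg.2 a ha]; split_ifs <;> simp
    obtain ⟨J₀, g', hg', hle, hJ₀⟩ := exists_journey_of_excess n 0 s g hg.1 hbal
    obtain ⟨J, hpos, hdisj⟩ := exists_journeys_of_isFlow n g' hg'
    have hsep : ∀ j, TimeEdgeDisjoint J₀ (J j) ∧ TimeEdgeDisjoint (J j) J₀ := fun j =>
      ⟨Journey.timeEdgeDisjoint_of_separates (fun e => Function.uncurry g' (arc T e) = 0)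
          (fun k => (hJ₀ k).2.1) fun l => (hpos j l).ne',
        Journey.timeEdgeDisjoint_of_separates (fun e => 0 < Function.uncurry g' (arc T e))
          (hpos j) fun k => by simp [(hJ₀ k).2.1]⟩
    refine ⟨Fin.cons J₀ J,
      Fin.cases (fun k => (hJ₀ k).2.2) fun i k => (hpos i k).trans_le (hle _ _), fun i j hij => ?_⟩
    cases i using Fin.cases <;> cases j using Fin.cases
    · exact absurd rfl hij
    · exact (hsep _).1
    · exact (hsep _).2
    · exact hdisj fun h => hij (congrArg Fin.succ h)

lemma exists_cut_of_cutCap_lt (hT : ∀ x y, ∀ t ∈ lab x y, t < T) {S : Finset (V × Fin (T + 1))}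
    (hs : (s, 0) ∈ S) (hv : (v, Fin.last T) ∉ S) (hW : cutCap (cap E lab T W) S < W) :
    ∃ D : Finset (V × V × ℕ), D.card ≤ cutCap (cap E lab T W) S ∧
      IsEmpty (Journey E (removeTimeEdges lab D) s v) := by
  have hwait : ∀ x (i j : Fin (T + 1)), i ≤ j → (x, i) ∈ S → (x, j) ∈ S := by
    intro x i j hij hi
    induction j using Fin.induction with
    | zero => rwa [Fin.le_zero_iff.1 hij] at hi
    | succ j ih =>
      rcases hij.eq_or_lt with rfl | hlt
      · exact hi
      · by_contra hout
        exact not_le.2 hW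
          ((le_cap_wait x j).trans (le_cutCap _ (ih (Fin.le_castSucc_iff.2 hlt)) hout))
  set D := ((S ×ˢ Sᶜ).filter fun p => 0 < cap E lab T W p.1 p.2).image
    fun p => (p.1.1, p.2.1, p.1.2.val)
  refine ⟨D, ?_, ⟨fun J => ?_⟩⟩
  · calc D.card ≤ ((S ×ˢ Sᶜ).filter fun p => 0 < cap E lab T W p.1 p.2).card := card_image_le
      _ ≤ ∑ p ∈ (S ×ˢ Sᶜ).filter (fun p => 0 < cap E lab T W p.1 p.2), cap E lab T W p.1 p.2 := by
        rw [card_eq_sum_ones]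
        exact sum_le_sum fun p hp => (mem_filter.1 hp).2
      _ ≤ ∑ p ∈ S ×ˢ Sᶜ, cap E lab T W p.1 p.2 := sum_le_sum_of_subset (filter_subset _ _)
      _ = cutCap (cap E lab T W) S := sum_product ..
  · let P : V → ℕ → Prop := fun x τ => ∃ i : Fin (T + 1), i.val ≤ τ ∧ (x, i) ∈ S
    have hstep : ∀ k τ, τ ≤ J.lbl k →
        P (J.vert k.castSucc) τ → P (J.vert k.succ) (J.lbl k + 1) := by
      rintro k τ hτ ⟨i, hiτ, hi⟩
      obtain ⟨ht, hnD⟩ := mem_filter.1 (J.mem k)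
      let t : Fin T := ⟨J.lbl k, hT _ _ _ ht⟩
      have hx : (J.vert k.castSucc, t.castSucc) ∈ S :=
        hwait _ i _ (Fin.le_def.2 (hiτ.trans hτ)) hi
      refine ⟨t.succ, le_rfl, by_contra fun hout => hnD ?_⟩
      refine mem_image.2 ⟨((J.vert k.castSucc, t.castSucc), (J.vert k.succ, t.succ)),
        mem_filter.2 ⟨mem_product.2 ⟨hx, mem_compl.2 hout⟩, ?_⟩, rfl⟩
      simp [cap, t, J.edge k, ht]
    obtain ⟨τ, i, -, hi⟩ := J.exists_of_step P ⟨0, le_rfl, hs⟩ hstep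
    exact hv (hwait v i _ (Fin.le_last i) hi)

end TimeExpanded

def timeEdges {V : Type*} [Fintype V] [DecidableEq V] (lab : V → V → Finset ℕ) :
    Finset (V × V × ℕ) :=
  Finset.univ.biUnion fun p : V × V => (lab p.1 p.2).image fun t => (p.1, p.2, t)

lemma mem_timeEdges {V : Type*} [Fintype V] [DecidableEq V] {lab : V → V → Finset ℕ}
    {e : V × V × ℕ} : e ∈ timeEdges lab ↔ e.2.2 ∈ lab e.1 e.2.1 := by
  obtain ⟨x, y, t⟩ := e
  simp [timeEdges]

open FlowNetwork TimeExpanded in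
/-- Menger's temporal analogue (time-edge disjoint version): the maximum number of
pairwise time-edge disjoint journeys from `s` to `v` equals the minimum number of
time-edges whose removal leaves no journey from `s` to `v`. -/
theorem menger_temporal_time_edge_disjoint {V : Type*} [Fintype V] [DecidableEq V]
    (E : V → V → Prop) (lab : V → V → Finset ℕ) (s v : V) (hsv : s ≠ v) :
    ∃ M : ℕ,
      IsGreatest {n | ∃ J : Fin n → Journey E lab s v,
        ∀ i j, i ≠ j → TimeEdgeDisjoint (J i) (J j)} M ∧
      IsLeast {n | ∃ D : Finset (V × V × ℕ), D.card = n ∧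
        IsEmpty (Journey E (removeTimeEdges lab D) s v)} M := by
  set T := (timeEdges lab).sup (fun e => e.2.2) + 1
  have hT : ∀ x y, ∀ t ∈ lab x y, t < T := fun x y t ht =>
    Nat.lt_succ_of_le (Finset.le_sup (f := fun e : V × V × ℕ => e.2.2) (b := (x, y, t))
      (mem_timeEdges.2 ht))
  -- more than the value of any flow, so that no minimum cut separates a vertex from its future
  set W := (timeEdges lab).card + 1
  have hst : ((s, 0) : V × Fin (T + 1)) ≠ (v, Fin.last T) := fun h => hsv (congrArg Prod.fst h)
  obtain ⟨N, g, S, hg, hs, hv, hcut⟩ := exists_isFlow_eq_cutCap (cap E lab T W) hst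
  obtain ⟨J, -, hJ⟩ := exists_journeys_of_isFlow N g hg
  have hle : ∀ {m} (J' : Fin m → Journey E lab s v),
      Pairwise (fun i j => TimeEdgeDisjoint (J' i) (J' j)) →
      ∀ D, IsEmpty (Journey E (removeTimeEdges lab D) s v) → m ≤ D.card := fun J' hJ' D hD =>
    Journey.le_card_of_pairwise_timeEdgeDisjoint J' hJ' D fun i =>
      (J' i).exists_timeEdge_mem_of_isEmpty hD
  have hNW : N < W := Nat.lt_succ_of_le <| Journey.le_card_of_pairwise_timeEdgeDisjoint J hJ _
    fun i => ⟨⟨0, (J i).len_pos hsv⟩, mem_timeEdges.2 ((J i).mem _)⟩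
  obtain ⟨D, hDN, hD⟩ := exists_cut_of_cutCap_lt hT hs hv (hcut ▸ hNW)
  rw [hcut] at hDN
  exact ⟨N, ⟨⟨J, hJ⟩, fun m ⟨J', hJ'⟩ => (hle J' hJ' D hD).trans hDN⟩,
    ⟨D, le_antisymm hDN (hle J hJ D hD), hD⟩, fun m ⟨D', hD'card, hD'⟩ => hD'card ▸ hle J hJ D' hD'⟩
end

section
/- If G is the directed ring (directed cycle) on n vertices and the age of the labeling is restricted to at most n−1, then the temporality of G with respect to the all-paths property equals n−1; in fact, the only way to preserve all simple paths with age n−1 is to assign to every edge all of the labels 1, 2, …, n−1 (up to a common shift). -/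
/-!
A simple path visits each vertex at most once, so it has fewer edges than there are vertices and
the constant labeling `{1, …, n-1}` preserves it. Conversely, the Hamiltonian path of the ring
that starts `s` steps before a given edge has `n - 1` edges, so its strictly increasing labels
from a window of `n - 1` values are forced to be `a, a + 1, …, a + n - 2`; the given edge, being
its `s`-th edge, therefore carries the label `a + s`.
-/

/-- `w` is a simple path of the digraph with edge relation `E`: a sequence of
`k + 1` distinct vertices joined by consecutive edges. -/
def IsPath {V : Type*} (E : V → V → Prop) {k : ℕ} (w : Fin (k + 1) → V) : Prop :=
  Function.Injective w ∧ ∀ i : Fin k, E (w i.castSucc) (w i.succ)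

/-- The labeling `lab` preserves the path `w`: there is a strictly increasing
choice of labels along the consecutive edges of `w`. -/
def Preserves {V : Type*} (lab : V → V → Finset ℕ) {k : ℕ} (w : Fin (k + 1) → V) : Prop :=
  ∃ l : Fin k → ℕ, StrictMono l ∧ ∀ i : Fin k, l i ∈ lab (w i.castSucc) (w i.succ)

/-- The labeling `lab` preserves every simple path of the digraph `E`
(the "all paths" property). -/
def PreservesAll {V : Type*} (E : V → V → Prop) (lab : V → V → Finset ℕ) : Prop :=
  ∀ (k : ℕ) (w : Fin (k + 1) → V), IsPath E w → Preserves lab w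

/-- The directed ring on `n` vertices `0, 1, …, n-1`: there is an edge from `i`
to `j` iff `j = i + 1 (mod n)`. -/
def ringAdj (n : ℕ) : Fin n → Fin n → Prop :=
  fun i j => (j : ℕ) = ((i : ℕ) + 1) % n

theorem preservesAll_const_Icc {V : Type*} [Fintype V] (E : V → V → Prop) :
    PreservesAll E (fun _ _ => Finset.Icc 1 (Fintype.card V - 1)) := by
  intro k w hw
  have hk : k + 1 ≤ Fintype.card V := by simpa using Fintype.card_le_of_injective w hw.1
  refine ⟨fun x => x + 1, fun _ _ h => Nat.succ_lt_succ h, fun x => ?_⟩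
  have := x.isLt
  simp only [Finset.mem_Icc]
  omega

theorem StrictMono.eq_add_of_mem_Ico {m a : ℕ} {l : Fin m → ℕ} (hl : StrictMono l)
    (hmem : ∀ x, l x ∈ Finset.Ico a (a + m)) (x : Fin m) : l x = a + x := by
  have hbounds (y : Fin m) := Finset.mem_Ico.mp (hmem y)
  let g : Fin m → Fin m := fun y => ⟨l y - a, by have := hbounds y; omega⟩
  have hg : StrictMono g := fun y z hyz => by
    have := hl hyz
    have := hbounds y
    show l y - a < l z - a
    omega
  have hgx : l x - a = x := congrArg Fin.val (congrFun hg.eq_id x)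
  have := hbounds x
  omega

theorem ringAdj_iff {n : ℕ} [NeZero n] {i j : Fin n} : ringAdj n i j ↔ j = i + 1 := by
  simp [ringAdj, Fin.ext_iff, Fin.val_add]

theorem isPath_ringAdj_add (m : ℕ) (v : Fin (m + 1)) :
    IsPath (ringAdj (m + 1)) (v + ·) :=
  ⟨add_right_injective v, fun x => ringAdj_iff.mpr (by rw [add_assoc, Fin.coeSucc_eq_succ])⟩

theorem Ico_subset_of_preservesAll_ringAdj (m a : ℕ) (lab : Fin (m + 1) → Fin (m + 1) → Finset ℕ)
    (hwin : ∀ i j, ringAdj (m + 1) i j → lab i j ⊆ Finset.Ico a (a + m))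
    (hpres : PreservesAll (ringAdj (m + 1)) lab) {i j : Fin (m + 1)}
    (hij : ringAdj (m + 1) i j) : Finset.Ico a (a + m) ⊆ lab i j := by
  intro t ht
  obtain ⟨hat, hta⟩ := Finset.mem_Ico.mp ht
  let s : Fin m := ⟨t - a, by omega⟩
  have hpath := isPath_ringAdj_add m (i - s.castSucc)
  obtain ⟨l, hl, hlab⟩ := hpres m _ hpath
  have hls : l s = t := by
    rw [hl.eq_add_of_mem_Ico fun y => hwin _ _ (hpath.2 y) (hlab y)]
    simp only [s]
    omega
  have hstart : i - s.castSucc + s.castSucc = i := sub_add_cancel i _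
  have hend : i - s.castSucc + s.succ = j := by
    rw [ringAdj_iff.mp hij, ← Fin.coeSucc_eq_succ]
    abel
  simpa only [hls, hstart, hend] using hlab s

/-- On the directed ring with `n ≥ 3` vertices, with the age restricted to at most
`n - 1`, the temporality w.r.t. the all-paths property equals `n - 1`:
the labeling assigning `{1, …, n-1}` to every edge preserves all simple paths
(so `n - 1` labels per edge and age `n - 1` suffice), and conversely every
labeling of age at most `n - 1` (all labels lying in a window `[a, a + n - 2]`
for a common shift `a`) that preserves all simple paths must assign to every
edge all of the `n - 1` labels `a, a + 1, …, a + n - 2`. -/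
theorem ring_age_restricted_temporality (n : ℕ) (hn : 3 ≤ n) :
    PreservesAll (ringAdj n) (fun _ _ => Finset.Icc 1 (n - 1)) ∧
    ∀ (lab : Fin n → Fin n → Finset ℕ) (a : ℕ),
      (∀ i j : Fin n, ringAdj n i j → ∀ t ∈ lab i j, t ∈ Finset.Icc a (a + n - 2)) →
      PreservesAll (ringAdj n) lab →
      ∀ i j : Fin n, ringAdj n i j → lab i j = Finset.Icc a (a + n - 2) := by
  refine ⟨by simpa using preservesAll_const_Icc (ringAdj n), fun lab a hwin hpres i j hij => ?_⟩
  obtain ⟨m, rfl⟩ : ∃ m, n = m + 1 := ⟨n - 1, by omega⟩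
  have hwindow : Finset.Icc a (a + (m + 1) - 2) = Finset.Ico a (a + m) := by
    ext
    simp only [Finset.mem_Icc, Finset.mem_Ico]
    omega
  rw [hwindow] at hwin ⊢
  exact Finset.Subset.antisymm (hwin i j hij)
    (Ico_subset_of_preservesAll_ringAdj m a lab hwin hpres hij)
end
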